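/- Let G be a plane graph that contains neither K4 nor C5 as a subgraph, with minimum degree δ(G) ≥ 3 and at least 5 vertices. Then every triangular block B of G satisfies 15·f(B) − 8·e(B) ≤ 0, where e(B) is the number of edges of B and f(B) = Σ_{e∈B} f(e) with f(e) = 1/l1 + 1/l2, l1 and l2 being the lengths of the (at most two) faces of G incident to e (with l1 = l2 the length of the unique incident face when e is a bridge). -/

import Mathlib

open SimpleGraph

namespace PlanarTuran

/-- Reversal of darts, as a permutation of the darts of `G`. -/
def dartRev {V : Type*} (G : SimpleGraph V) : Equiv.Perm G.Dart where
  toFun := Dart.symm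
  invFun := Dart.symm
  left_inv d := Dart.symm_symm d
  right_inv d := Dart.symm_symm d

/-- A rotation system (combinatorial embedding) of a simple graph `G`: a permutation of the
darts which fixes the initial vertex of every dart and is a single cycle on the darts leaving
each given vertex. -/
structure RotationSystem {V : Type*} (G : SimpleGraph V) where
  rot : Equiv.Perm G.Dart
  rot_fst : ∀ d : G.Dart, (rot d).fst = d.fst
  rot_cycle : ∀ d d' : G.Dart, d.fst = d'.fst → rot.SameCycle d d'

namespace RotationSystem

variable {V : Type*} {G : SimpleGraph V}

/-- The face permutation of the embedding: its orbits are the faces of the plane graph. -/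
def facePerm (R : RotationSystem G) : Equiv.Perm G.Dart :=
  (dartRev G).trans R.rot

/-- The face containing (the side of) a dart, encoded as the set of darts on its boundary walk. -/
def faceOf (R : RotationSystem G) (d : G.Dart) : Set G.Dart :=
  {d' | R.facePerm.SameCycle d d'}

/-- The length of the face incident to the dart `d`: the number of edge-sides on its
boundary walk (a bridge is counted twice). -/
noncomputable def faceLen (R : RotationSystem G) (d : G.Dart) : ℕ :=
  (R.faceOf d).ncard

/-- Darts lying on the same face. -/
def faceSetoid (R : RotationSystem G) : Setoid G.Dart :=
  ⟨R.facePerm.SameCycle,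
   ⟨fun d => Equiv.Perm.SameCycle.refl _ d, fun h => h.symm, fun h h' => h.trans h'⟩⟩

/-- The number of faces of the embedded graph (only counting faces having at least one edge on
their boundary). -/
noncomputable def numFaces (R : RotationSystem G) : ℕ :=
  Nat.card (Quotient R.faceSetoid)

/-- Darts on the same face, within the connected component `C`. -/
def faceSetoidIn (R : RotationSystem G) (C : G.ConnectedComponent) :
    Setoid {d : G.Dart // G.connectedComponentMk d.fst = C} :=
  ⟨fun d d' => R.facePerm.SameCycle d.1 d'.1,
   ⟨fun d => Equiv.Perm.SameCycle.refl _ _, fun h => h.symm, fun h h' => h.trans h'⟩⟩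

/-- The rotation system is a *plane* (genus zero) embedding: every connected component
containing at least one edge satisfies Euler's formula `n - e + f = 2`
(written here as `2*n + 2*f = 2*e + 4`, where `2*e` is the number of darts). -/
def GenusZero (R : RotationSystem G) : Prop :=
  ∀ C : G.ConnectedComponent, (∃ d : G.Dart, G.connectedComponentMk d.fst = C) →
    2 * Nat.card {v : V // G.connectedComponentMk v = C}
      + 2 * Nat.card (Quotient (R.faceSetoidIn C))
      = Nat.card {d : G.Dart // G.connectedComponentMk d.fst = C} + 4

/-- The contribution `f(e) = 1/l₁ + 1/l₂` of an edge `e` to the face number, where `l₁, l₂`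
are the lengths of the faces incident to the two darts of `e` (for a bridge both darts lie
on the same face, giving `f(e) = 2/l`). -/
noncomputable def fEdge [Fintype V] [DecidableEq V] [DecidableRel G.Adj]
    (R : RotationSystem G) (e : Sym2 V) : ℚ :=
  ∑ d ∈ Finset.univ.filter (fun d : G.Dart => d.edge = e), (1 : ℚ) / (R.faceLen d)

/-- The edges `e₁` and `e₂` both lie on a common `3`-face. -/
def shares3Face (R : RotationSystem G) (e₁ e₂ : Sym2 V) : Prop :=
  ∃ d₁ d₂ : G.Dart, d₁.edge = e₁ ∧ d₂.edge = e₂ ∧ R.faceLen d₁ = 3 ∧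
    R.facePerm.SameCycle d₁ d₂

/-- The triangular block generated by an edge `e`: the closure of `{e}` under adding all
edges of any `3`-face containing an edge already present. -/
def triBlockOf (R : RotationSystem G) (e : Sym2 V) : Set (Sym2 V) :=
  {e' | Relation.ReflTransGen R.shares3Face e e'}

/-- `B` is a triangular block of the plane graph `G`. -/
def IsTriangularBlock (R : RotationSystem G) (B : Set (Sym2 V)) : Prop :=
  ∃ e ∈ G.edgeSet, B = R.triBlockOf e

end RotationSystem

/-- A graph is planar iff it admits a genus-zero rotation system. -/
def _root_.SimpleGraph.IsPlanar {V : Type*} (G : SimpleGraph V) : Prop :=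
  ∃ R : RotationSystem G, R.GenusZero

/-- `G` contains no cycle of length `k`; equivalently, no subgraph isomorphic to `C_k`. -/
def _root_.SimpleGraph.CycleFree {V : Type*} (G : SimpleGraph V) (k : ℕ) : Prop :=
  ∀ ⦃v : V⦄ (w : G.Walk v v), w.IsCycle → w.length ≠ k

/-- A graph is 2-connected if it has at least 3 vertices and deleting any single vertex
leaves it connected. -/
def _root_.SimpleGraph.IsTwoConnected {V : Type*} (G : SimpleGraph V) : Prop :=
  3 ≤ Nat.card V ∧ ∀ v : V, (G.induce {u | u ≠ v}).Connected

/-- The set of vertices covered by a set `B` of edges. -/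
def blockVerts {V : Type*} (B : Set (Sym2 V)) : Set V :=
  {v | ∃ e ∈ B, v ∈ e}

/-- An edge set forming a single edge `K₂`. -/
def IsK2Block {V : Type*} (B : Set (Sym2 V)) : Prop :=
  ∃ u v : V, u ≠ v ∧ B = {s(u, v)}

/-- An edge set forming a triangle `K₃`. -/
def IsK3Block {V : Type*} (B : Set (Sym2 V)) : Prop :=
  ∃ u v w : V, u ≠ v ∧ u ≠ w ∧ v ≠ w ∧ B = {s(u, v), s(v, w), s(u, w)}

/-- An edge set forming `B₄`, two triangles `u v w` and `v w x` sharing the edge `v w`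
(`K₄` minus an edge). -/
def IsB4Block {V : Type*} (B : Set (Sym2 V)) : Prop :=
  ∃ u v w x : V, u ≠ v ∧ u ≠ w ∧ u ≠ x ∧ v ≠ w ∧ v ≠ x ∧ w ≠ x ∧
    B = {s(u, v), s(u, w), s(v, w), s(v, x), s(w, x)}

/-- An edge set forming `B₅ₐ`: a path `x₁x₂x₃x₄` plus an apex `y` joined to all of
`x₁, x₂, x₃, x₄`. -/
def IsB5aBlock {V : Type*} (B : Set (Sym2 V)) : Prop :=
  ∃ y x₁ x₂ x₃ x₄ : V, y ≠ x₁ ∧ y ≠ x₂ ∧ y ≠ x₃ ∧ y ≠ x₄ ∧ x₁ ≠ x₂ ∧ x₁ ≠ x₃ ∧ x₁ ≠ x₄ ∧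
    x₂ ≠ x₃ ∧ x₂ ≠ x₄ ∧ x₃ ≠ x₄ ∧
    B = {s(y, x₁), s(y, x₂), s(y, x₃), s(y, x₄), s(x₁, x₂), s(x₂, x₃), s(x₃, x₄)}

/-- An edge set forming `B₅ᵦ`, the wheel `W₄`: a `4`-cycle `x₁x₂x₃x₄` plus a center `c`
joined to all four cycle vertices. -/
def IsB5bBlock {V : Type*} (B : Set (Sym2 V)) : Prop :=
  ∃ c x₁ x₂ x₃ x₄ : V, c ≠ x₁ ∧ c ≠ x₂ ∧ c ≠ x₃ ∧ c ≠ x₄ ∧ x₁ ≠ x₂ ∧ x₁ ≠ x₃ ∧ x₁ ≠ x₄ ∧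
    x₂ ≠ x₃ ∧ x₂ ≠ x₄ ∧ x₃ ≠ x₄ ∧
    B = {s(c, x₁), s(c, x₂), s(c, x₃), s(c, x₄), s(x₁, x₂), s(x₂, x₃), s(x₃, x₄), s(x₄, x₁)}

end PlanarTuran

open PlanarTuran

/-!
Write `15 f(B) - 8 e(B)` as `∑ (15 / ℓ(d) - 4)` over the darts `d` with edge in `B`, where `ℓ(d)`
is the length of the face of `d`. Minimum degree `3` gives `ℓ ≥ 3` everywhere and forbids the
rotation at a vertex to be a transposition; with `C₅`-freeness this rules out faces of length `5`
and `3`-faces adjacent to `4`-faces. So a dart on a `3`-face contributes `1`, a dart opposite to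
one at most `-3/2` (its face has length `≥ 6`), and any other dart at most `0`; hence
`15 f(B) - 8 e(B) ≤ (3 m - t) / 2`, where `t` counts the darts of `B` on `3`-faces and `m` those
among them whose reverse is on a `3`-face too. If `m > 0`, pick such a dart `y`: `K₄`- and
`C₅`-freeness leave no `3`-face across the four outer edges of the two triangles at `y`, so the
block consists of these two triangles, `t = 6` and `m = 2`.
-/

namespace PlanarTuran

open Finset

section Subgraphs

variable {V : Type*} {G : SimpleGraph V}

lemma not_cliqueFree_four {a b c d : V} (hab : G.Adj a b) (hac : G.Adj a c)
    (had : G.Adj a d) (hbc : G.Adj b c) (hbd : G.Adj b d) (hcd : G.Adj c d) :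
    ¬ G.CliqueFree 4 := by
  classical
  exact fun h =>
    h {a, b, c, d} ((is3Clique_triple_iff.2 ⟨hbc, hbd, hcd⟩).insert (by simp [hab, hac, had]))

lemma not_cycleFree_five {a b c d e : V} (hab : G.Adj a b) (hbc : G.Adj b c) (hcd : G.Adj c d)
    (hde : G.Adj d e) (hea : G.Adj e a) (hac : a ≠ c) (had : a ≠ d) (hbd : b ≠ d) (hbe : b ≠ e)
    (hce : c ≠ e) : ¬ G.CycleFree 5 := fun h =>
  h (.cons hab (.cons hbc (.cons hcd (.cons hde (.cons hea .nil))))) (by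
    rw [Walk.cons_isCycle_iff]
    simp [hab.ne, hbc.ne, hcd.ne, hde.ne, hea.ne, hac, had, hbd, hbe, hce,
      hab.ne.symm, hea.ne.symm, hac.symm, had.symm]) rfl

lemma card_filter_edge_mem [Fintype V] [DecidableEq V] [DecidableRel G.Adj]
    {s : Finset (Sym2 V)} (hs : ∀ e ∈ s, e ∈ G.edgeSet) :
    #({d : G.Dart | d.edge ∈ s} : Finset G.Dart) = 2 * #s := by
  have hfiber : ∀ e ∈ s, ({d ∈ {d : G.Dart | d.edge ∈ s} | d.edge = e} : Finset G.Dart) =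
      ({d : G.Dart | d.edge = e} : Finset G.Dart) := fun e he => by
    ext d
    simp only [mem_filter, mem_univ, true_and]
    exact ⟨And.right, fun h => ⟨h ▸ he, h⟩⟩
  rw [card_eq_sum_card_fiberwise (f := Dart.edge) (t := s) fun d hd => by simpa using hd,
    sum_congr rfl fun e he => by rw [hfiber e he, G.dart_edge_fiber_card e (hs e he)],
    sum_const, smul_eq_mul, mul_comm]

end Subgraphs

namespace RotationSystem

open Equiv

variable {V : Type*} {G : SimpleGraph V} (R : RotationSystem G)

lemma facePerm_apply (d : G.Dart) : R.facePerm d = R.rot d.symm := rfl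

@[simp] lemma facePerm_fst (d : G.Dart) : (R.facePerm d).fst = d.snd := R.rot_fst _

lemma facePerm_apply_ne (d : G.Dart) : R.facePerm d ≠ d := fun h =>
  d.fst_ne_snd (by rw [← R.facePerm_fst d, h])

lemma faceLen_congr {d d' : G.Dart} (h : d' ∈ R.faceOf d) : R.faceLen d' = R.faceLen d := by
  have : R.faceOf d' = R.faceOf d := Set.ext fun _ => ⟨h.trans, h.symm.trans⟩
  rw [faceLen, faceLen, this]

lemma shares3Face_symm {e₁ e₂ : Sym2 V} (h : R.shares3Face e₁ e₂) : R.shares3Face e₂ e₁ := by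
  obtain ⟨d₁, d₂, h₁, h₂, h3, hc⟩ := h
  exact ⟨d₂, d₁, h₂, h₁, (R.faceLen_congr hc).trans h3, hc.symm⟩

lemma triBlockOf_eq_of_mem {e e' : Sym2 V} (h : e' ∈ R.triBlockOf e) :
    R.triBlockOf e' = R.triBlockOf e :=
  have : Std.Symm R.shares3Face := ⟨fun _ _ => R.shares3Face_symm⟩
  Set.ext fun _ => ⟨h.trans, (symm_of (Relation.ReflTransGen R.shares3Face) h).trans⟩

lemma triBlockOf_subset_edgeSet {e : Sym2 V} (he : e ∈ G.edgeSet) :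
    R.triBlockOf e ⊆ G.edgeSet := by
  intro e' h
  induction h with
  | refl => exact he
  | tail _ hstep =>
    obtain ⟨-, d₂, -, rfl, -⟩ := hstep
    exact d₂.edge_mem

lemma edge_mem_triBlockOf {d d' : G.Dart} (hd : R.faceLen d = 3) (hd' : d' ∈ R.faceOf d) :
    d'.edge ∈ R.triBlockOf d.edge :=
  .single ⟨d, d', rfl, rfl, hd, hd'⟩

lemma mem_of_edge_mem_triBlockOf {T : Set G.Dart} (hface : ∀ x ∈ T, R.faceOf x ⊆ T)
    (hsymm : ∀ x ∈ T, R.faceLen x.symm = 3 → x.symm ∈ T) {d₀ d : G.Dart} (h₀ : d₀ ∈ T)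
    (hd : d.edge ∈ R.triBlockOf d₀.edge) (hd3 : R.faceLen d = 3) : d ∈ T := by
  have hedge : ∀ x ∈ T, ∀ d : G.Dart, d.edge = x.edge → R.faceLen d = 3 → d ∈ T := by
    intro x hx d hdx hd3
    rcases (dart_edge_eq_iff d x).1 hdx with rfl | rfl
    exacts [hx, hsymm _ hx hd3]
  suffices ∀ e ∈ R.triBlockOf d₀.edge, ∀ d : G.Dart, d.edge = e → R.faceLen d = 3 → d ∈ T from
    this _ hd d rfl hd3
  intro e he
  induction he with
  | refl => exact hedge d₀ h₀
  | tail _ hstep ih =>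
    obtain ⟨d₁, d₂, rfl, rfl, h₁, h₁₂⟩ := hstep
    exact hedge d₂ (hface d₁ (ih d₁ rfl h₁) h₁₂)

section Finite

variable [Fintype V] [DecidableRel G.Adj]

lemma degree_le_of_rot_pow_apply_eq {d : G.Dart} {k : ℕ}
    (hk : 0 < k) (h : (R.rot ^ k) d = d) : G.degree d.fst ≤ k := by
  classical
  have hper : Function.IsPeriodicPt R.rot k d := by
    show (⇑R.rot)^[k] d = d
    rwa [Perm.iterate_eq_pow]
  rw [← card_neighborFinset_eq_degree]
  calc #(G.neighborFinset d.fst) ≤ #((range k).image fun i => ((R.rot ^ i) d).snd) := by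
        refine card_le_card fun b hb => ?_
        obtain ⟨i, -, hi⟩ := (R.rot_cycle d ⟨(d.fst, b), (mem_neighborFinset _ _ _).1 hb⟩
          rfl).exists_pow_eq'
        refine mem_image.2 ⟨i % k, mem_range.2 (Nat.mod_lt _ hk), ?_⟩
        rw [← Perm.iterate_eq_pow, hper.iterate_mod_apply, Perm.iterate_eq_pow, hi]
    _ ≤ k := card_image_le.trans (card_range k).le

lemma facePerm_ne_symm {d : G.Dart} (hd : 2 ≤ G.degree d.snd) : R.facePerm d ≠ d.symm := by
  intro h
  have : G.degree d.snd ≤ 1 := R.degree_le_of_rot_pow_apply_eq one_pos (d := d.symm) (by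
    rwa [pow_one, ← facePerm_apply])
  omega

lemma fst_ne_facePerm_snd {d : G.Dart} (hd : 2 ≤ G.degree d.snd) : d.fst ≠ (R.facePerm d).snd :=
  fun h => R.facePerm_ne_symm hd (Dart.ext _ _ (Prod.ext (by simp) (by simp [h])))

/-- Otherwise the rotation at `a.snd` would swap `a.symm` and `facePerm a`. -/
lemma snd_facePerm_symm_facePerm_ne {a : G.Dart} (ha : 3 ≤ G.degree a.snd) :
    (R.facePerm (R.facePerm a).symm).snd ≠ a.fst := by
  intro h
  have hrot : R.rot (R.facePerm a) = R.facePerm (R.facePerm a).symm := by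
    rw [R.facePerm_apply (R.facePerm a).symm, Dart.symm_symm]
  have hback : R.facePerm (R.facePerm a).symm = a.symm :=
    Dart.ext _ _ (Prod.ext (by simp) (by simpa using h))
  have : G.degree a.snd ≤ 2 := R.degree_le_of_rot_pow_apply_eq two_pos (d := a.symm) (by
    rw [pow_two, Perm.mul_apply, ← facePerm_apply, hrot, hback])
  omega

lemma faceLen_eq_card_support_cycleOf [DecidableEq V] (d : G.Dart) :
    R.faceLen d = #(R.facePerm.cycleOf d).support := by
  rw [faceLen, ← Set.ncard_coe_finset]
  congr 1
  ext d'
  exact (Perm.mem_support_cycleOf_iff' (R.facePerm_apply_ne d)).symm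

lemma facePerm_pow_faceLen (d : G.Dart) : (R.facePerm ^ R.faceLen d) d = d := by
  classical
  rw [faceLen_eq_card_support_cycleOf, ← Perm.pow_mod_card_support_cycleOf_self_apply,
    Nat.mod_self, pow_zero, Perm.one_apply]

lemma mem_faceOf_iff {d d' : G.Dart} :
    d' ∈ R.faceOf d ↔ ∃ n < R.faceLen d, (R.facePerm ^ n) d = d' := by
  classical
  rw [faceLen_eq_card_support_cycleOf]
  exact ⟨fun h => Perm.SameCycle.exists_pow_eq_of_mem_support h
    (Perm.mem_support.2 (R.facePerm_apply_ne d)), fun ⟨n, _, h⟩ => ⟨n, by simpa using h⟩⟩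

lemma three_le_faceLen (hδ : ∀ v, 2 ≤ G.degree v) (d : G.Dart) : 3 ≤ R.faceLen d := by
  classical
  have h2 : 2 ≤ R.faceLen d := by
    rw [faceLen_eq_card_support_cycleOf]
    exact Perm.two_le_card_support_cycleOf_iff.2 (R.facePerm_apply_ne d)
  refine h2.lt_of_ne fun h => R.fst_ne_facePerm_snd (d := d) (hδ _) ?_
  have hd := R.facePerm_pow_faceLen d
  rw [← h, pow_two, Perm.mul_apply] at hd
  rw [← R.facePerm_fst (R.facePerm d), hd]

lemma eq_or_eq_or_eq_of_mem_faceOf {d d' : G.Dart} (h : R.faceLen d = 3)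
    (hd' : d' ∈ R.faceOf d) : d' = d ∨ d' = R.facePerm d ∨ d' = R.facePerm (R.facePerm d) := by
  obtain ⟨n, hn, rfl⟩ := R.mem_faceOf_iff.1 hd'
  rw [h] at hn
  interval_cases n <;> simp [pow_succ]

lemma facePerm_facePerm_facePerm_eq_self {d : G.Dart} (h : R.faceLen d = 3) :
    R.facePerm (R.facePerm (R.facePerm d)) = d := by
  simpa [h, pow_succ] using R.facePerm_pow_faceLen d

lemma snd_facePerm_facePerm_eq_fst {d : G.Dart} (h : R.faceLen d = 3) :
    (R.facePerm (R.facePerm d)).snd = d.fst := by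
  rw [← R.facePerm_fst, R.facePerm_facePerm_facePerm_eq_self h]

lemma snd_facePerm_symm_ne_snd_facePerm {d : G.Dart} (hδ : 3 ≤ G.degree d.fst)
    (hd : R.faceLen d = 3) : (R.facePerm d.symm).snd ≠ (R.facePerm d).snd := by
  have := R.snd_facePerm_symm_facePerm_ne (a := R.facePerm (R.facePerm d))
    (by rwa [R.snd_facePerm_facePerm_eq_fst hd])
  rwa [R.facePerm_facePerm_facePerm_eq_self hd, R.facePerm_fst] at this

lemma faceLen_ne_five (hδ : ∀ v, 2 ≤ G.degree v) (hC5 : G.CycleFree 5) (d : G.Dart) :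
    R.faceLen d ≠ 5 := by
  intro h5
  set d₁ := R.facePerm d
  set d₂ := R.facePerm d₁
  set d₃ := R.facePerm d₂
  set d₄ := R.facePerm d₃
  have hclose : R.facePerm d₄ = d := by simpa [h5, pow_succ] using R.facePerm_pow_faceLen d
  have e₁ : d₁.fst = d.snd := R.facePerm_fst _
  have e₂ : d₂.fst = d₁.snd := R.facePerm_fst _
  have e₃ : d₃.fst = d₂.snd := R.facePerm_fst _
  have e₄ : d₄.fst = d₃.snd := R.facePerm_fst _
  have h₄ : d₄.snd = d.fst := by rw [← R.facePerm_fst d₄, hclose]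
  have hback : ∀ z : G.Dart, z.fst ≠ (R.facePerm z).snd := fun z => R.fst_ne_facePerm_snd (hδ _)
  have h₁₃ := hback d₁
  have h₂₄ := hback d₂
  have h₃₀ := hback d₃
  have h₄₁ := hback d₄
  rw [e₁] at h₁₃
  rw [e₂] at h₂₄
  rw [e₃, show R.facePerm d₃ = d₄ from rfl, h₄] at h₃₀
  rw [e₄, hclose] at h₄₁
  refine not_cycleFree_five d.adj (e₁ ▸ d₁.adj) (e₂ ▸ d₂.adj) (e₃ ▸ d₃.adj) (e₄ ▸ h₄ ▸ d₄.adj)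
    (hback d) h₃₀.symm h₁₃ h₄₁.symm h₂₄ hC5

lemma faceLen_symm_ne_four (hδ : ∀ v, 3 ≤ G.degree v) (hC5 : G.CycleFree 5) {d : G.Dart}
    (hd : R.faceLen d = 3) : R.faceLen d.symm ≠ 4 := by
  -- `d` runs along a triangle `u v w`, `d.symm` along a quadrangle `v u c e`; `c = w` and `e = w`
  -- are excluded by the rotations at `u` and `v`, and otherwise `w u c e v` is a `C₅`.
  intro h4
  set a := R.facePerm d
  set b := R.facePerm a
  set p := R.facePerm d.symm
  set q := R.facePerm p
  set r := R.facePerm q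
  have hclose : R.facePerm r = d.symm := by
    simpa [h4, pow_succ] using R.facePerm_pow_faceLen d.symm
  have ha₁ : a.fst = d.snd := R.facePerm_fst _
  have hb₁ : b.fst = a.snd := R.facePerm_fst _
  have hb₂ : b.snd = d.fst := R.snd_facePerm_facePerm_eq_fst hd
  have hp₁ : p.fst = d.fst := R.facePerm_fst _
  have hq₁ : q.fst = p.snd := R.facePerm_fst _
  have hr₁ : r.fst = q.snd := R.facePerm_fst _
  have hr₂ : r.snd = d.snd := by rw [← R.facePerm_fst r, hclose]; rfl
  have hδ₂ : ∀ v, 2 ≤ G.degree v := fun v => (hδ v).trans' (by norm_num)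
  have hcw : p.snd ≠ a.snd := R.snd_facePerm_symm_ne_snd_facePerm (hδ _) hd
  have hew : q.snd ≠ a.snd := by
    have := R.snd_facePerm_symm_facePerm_ne (hδ r.snd) (a := r)
    rw [hclose, Dart.symm_symm, hr₁] at this
    exact this.symm
  have hue : d.fst ≠ q.snd := hp₁ ▸ R.fst_ne_facePerm_snd (hδ₂ _)
  have hcv : p.snd ≠ d.snd := hr₂ ▸ hq₁ ▸ R.fst_ne_facePerm_snd (hδ₂ _)
  exact not_cycleFree_five (hb₁ ▸ hb₂ ▸ b.adj) (hp₁ ▸ p.adj) (hq₁ ▸ q.adj) (hr₁ ▸ hr₂ ▸ r.adj)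
    (ha₁ ▸ a.adj) hcw.symm hew.symm hue d.adj.ne hcv hC5

lemma six_le_faceLen_symm (hδ : ∀ v, 3 ≤ G.degree v) (hC5 : G.CycleFree 5) {d : G.Dart}
    (hd : R.faceLen d = 3) (hds : R.faceLen d.symm ≠ 3) : 6 ≤ R.faceLen d.symm := by
  have h3 := R.three_le_faceLen (fun v => (hδ v).trans' (by norm_num)) d.symm
  have h4 := R.faceLen_symm_ne_four hδ hC5 hd
  have h5 := R.faceLen_ne_five (fun v => (hδ v).trans' (by norm_num)) hC5 d.symm
  omega

lemma faceLen_facePerm_symm_ne_three (hδ : ∀ v, 3 ≤ G.degree v)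
    (hK4 : G.CliqueFree 4) (hC5 : G.CycleFree 5) {d : G.Dart} (hd : R.faceLen d = 3)
    (hds : R.faceLen d.symm = 3) : R.faceLen (R.facePerm d).symm ≠ 3 := by
  -- Triangles `u v w` on `d`, `v u x` on `d.symm` and `w v y` on `(facePerm d).symm`: `x = w` and
  -- `y = u` are excluded by the rotations at `u` and `v`, `y = x` spans a `K₄` on `u v w x`, and
  -- otherwise `y w u x v` is a `C₅`.
  intro has
  set a := R.facePerm d
  set b := R.facePerm a
  set p := R.facePerm d.symm
  set q := R.facePerm p
  set r := R.facePerm a.symm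
  set t := R.facePerm r
  have ha₁ : a.fst = d.snd := R.facePerm_fst _
  have hb₁ : b.fst = a.snd := R.facePerm_fst _
  have hb₂ : b.snd = d.fst := R.snd_facePerm_facePerm_eq_fst hd
  have hp₁ : p.fst = d.fst := R.facePerm_fst _
  have hq₁ : q.fst = p.snd := R.facePerm_fst _
  have hq₂ : q.snd = d.snd := R.snd_facePerm_facePerm_eq_fst hds
  have hr₁ : r.fst = d.snd := (R.facePerm_fst _).trans ha₁
  have ht₁ : t.fst = r.snd := R.facePerm_fst _
  have ht₂ : t.snd = a.snd := R.snd_facePerm_facePerm_eq_fst has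
  have hxw : p.snd ≠ a.snd := R.snd_facePerm_symm_ne_snd_facePerm (hδ _) hd
  have hyu : r.snd ≠ d.fst := R.snd_facePerm_symm_facePerm_ne (hδ d.snd)
  have huv := d.adj
  have hvw : G.Adj d.snd a.snd := ha₁ ▸ a.adj
  have hwu : G.Adj a.snd d.fst := hb₁ ▸ hb₂ ▸ b.adj
  have hux : G.Adj d.fst p.snd := hp₁ ▸ p.adj
  have hxv : G.Adj p.snd d.snd := hq₁ ▸ hq₂ ▸ q.adj
  have hvy : G.Adj d.snd r.snd := hr₁ ▸ r.adj
  have hyw : G.Adj r.snd a.snd := ht₁ ▸ ht₂ ▸ t.adj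
  by_cases hyx : r.snd = p.snd
  · rw [hyx] at hyw
    exact not_cliqueFree_four huv hwu.symm hux hvw hxv.symm hyw.symm hK4
  · exact not_cycleFree_five hyw hwu hux hxv hvy hyu hyx hxw.symm hvw.ne.symm huv.ne hC5

lemma faceLen_symm_ne_three_of_mem_faceOf (hδ : ∀ v, 3 ≤ G.degree v)
    (hK4 : G.CliqueFree 4) (hC5 : G.CycleFree 5) {y z : G.Dart} (hy : R.faceLen y = 3)
    (hys : R.faceLen y.symm = 3) (hz : z ∈ R.faceOf y) (hzy : z ≠ y) : R.faceLen z.symm ≠ 3 := by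
  rcases R.eq_or_eq_or_eq_of_mem_faceOf hy hz with rfl | rfl | rfl
  · exact absurd rfl hzy
  · exact R.faceLen_facePerm_symm_ne_three hδ hK4 hC5 hy hys
  · intro hzs
    refine R.faceLen_facePerm_symm_ne_three hδ hK4 hC5 ((R.faceLen_congr hz).trans hy) hzs ?_
    rwa [R.facePerm_facePerm_facePerm_eq_self hy]

lemma disjoint_faceOf_symm {y : G.Dart} (hδ : 2 ≤ G.degree y.snd) (hy : R.faceLen y = 3) :
    Disjoint (R.faceOf y) (R.faceOf y.symm) := by
  refine Set.disjoint_left.2 fun z hz hz' => ?_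
  rcases R.eq_or_eq_or_eq_of_mem_faceOf hy (hz.trans hz'.symm) with h | h | h
  · exact y.symm_ne h
  · exact R.facePerm_ne_symm hδ h.symm
  · apply (R.facePerm y).fst_ne_snd
    rw [← R.facePerm_fst (R.facePerm y), ← h, R.facePerm_fst]
    rfl

lemma eq_or_eq_symm_of_edge_mem_triBlockOf (hδ : ∀ v, 3 ≤ G.degree v) (hK4 : G.CliqueFree 4)
    (hC5 : G.CycleFree 5) {y m : G.Dart} (hy : R.faceLen y = 3) (hys : R.faceLen y.symm = 3)
    (hm : m.edge ∈ R.triBlockOf y.edge) (hm3 : R.faceLen m = 3) (hms : R.faceLen m.symm = 3) :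
    m = y ∨ m = y.symm := by
  have hT : ∀ x ∈ R.faceOf y ∪ R.faceOf y.symm, R.faceLen x.symm = 3 → x = y ∨ x = y.symm := by
    rintro x (hx | hx) hxs
    · by_cases h : x = y
      · exact Or.inl h
      · exact absurd hxs (R.faceLen_symm_ne_three_of_mem_faceOf hδ hK4 hC5 hy hys hx h)
    · by_cases h : x = y.symm
      · exact Or.inr h
      · exact absurd hxs (R.faceLen_symm_ne_three_of_mem_faceOf hδ hK4 hC5 hys
          (by rwa [Dart.symm_symm]) hx h)
  refine hT m (R.mem_of_edge_mem_triBlockOf ?_ ?_ (Or.inl (.refl _ _)) hm hm3) hms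
  · rintro x (hx | hx) z hz
    exacts [Or.inl (hx.trans hz), Or.inr (hx.trans hz)]
  · intro x hx hxs
    rcases hT x hx hxs with rfl | rfl
    · exact Or.inr (.refl _ _)
    · exact Or.inl (by rw [Dart.symm_symm]; exact .refl _ _)

variable [DecidableEq V]

lemma sum_fEdge_eq_sum_darts (s : Finset (Sym2 V)) :
    ∑ e ∈ s, R.fEdge e =
      ∑ d ∈ ({d : G.Dart | d.edge ∈ s} : Finset G.Dart), (1 : ℚ) / R.faceLen d := by
  rw [← sum_fiberwise_of_maps_to (g := Dart.edge) fun d hd => (mem_filter.1 hd).2]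
  refine sum_congr rfl fun e he => sum_congr ?_ fun _ _ => rfl
  ext d
  simp only [mem_filter, mem_univ, true_and]
  exact ⟨fun h => ⟨h ▸ he, h⟩, And.right⟩

lemma fifteen_mul_sum_fEdge_sub_eq {s : Finset (Sym2 V)} (hs : ∀ e ∈ s, e ∈ G.edgeSet) :
    15 * ∑ e ∈ s, R.fEdge e - 8 * #s =
      ∑ d ∈ ({d : G.Dart | d.edge ∈ s} : Finset G.Dart), (15 / (R.faceLen d : ℚ) - 4) := by
  rw [sum_fEdge_eq_sum_darts, sum_sub_distrib, mul_sum, sum_const, card_filter_edge_mem hs]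
  simp only [nsmul_eq_mul, mul_one_div]
  push_cast
  ring

theorem fifteen_mul_sum_fEdge_sub_le (h3 : ∀ d, 3 ≤ R.faceLen d)
    (h6 : ∀ d, R.faceLen d = 3 → R.faceLen d.symm ≠ 3 → 6 ≤ R.faceLen d.symm)
    {s : Finset (Sym2 V)} (hs : ∀ e ∈ s, e ∈ G.edgeSet) :
    15 * ∑ e ∈ s, R.fEdge e - 8 * #s ≤
      (3 * #({d : G.Dart | d.edge ∈ s ∧ R.faceLen d = 3 ∧ R.faceLen d.symm = 3} : Finset G.Dart)
        - #({d : G.Dart | d.edge ∈ s ∧ R.faceLen d = 3} : Finset G.Dart) : ℚ) / 2 := by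
  set S : Finset G.Dart := {d | d.edge ∈ s}
  set D : Finset G.Dart := {d | d.edge ∈ s ∧ R.faceLen d = 3}
  set M : Finset G.Dart := {d | d.edge ∈ s ∧ R.faceLen d = 3 ∧ R.faceLen d.symm = 3}
  set P := D.filter fun d => R.faceLen d.symm ≠ 3
  set w : G.Dart → ℚ := fun d => 15 / R.faceLen d - 4
  have hw : ∀ {d : G.Dart} {m : ℕ}, 0 < m → m ≤ R.faceLen d → w d ≤ 15 / m - 4 := fun hm h =>
    sub_le_sub_right (div_le_div_of_nonneg_left (by norm_num) (by exact_mod_cast hm)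
      (by exact_mod_cast h)) 4
  have hw3 : ∀ d ∈ S.filter (fun d => R.faceLen d = 3), w d = 1 := fun d hd => by
    simp only [w, (mem_filter.1 hd).2]
    norm_num
  have hw4 : ∀ d, R.faceLen d ≠ 3 → w d ≤ 0 := fun d hd =>
    (hw (m := 4) (by norm_num) ((h3 d).lt_of_ne' hd)).trans (by norm_num)
  have hw6 : ∀ d ∈ P, w d.symm ≤ -3 / 2 := fun d hd =>
    (hw (m := 6) (by norm_num) (h6 d (mem_filter.1 (mem_filter.1 hd).1).2.2
      (mem_filter.1 hd).2)).trans (by norm_num)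
  have hPsymm : P.image Dart.symm ⊆ S.filter fun d => R.faceLen d ≠ 3 := by
    intro d hd
    obtain ⟨d', hd', rfl⟩ := mem_image.1 hd
    obtain ⟨hd'D, hd's⟩ := mem_filter.1 hd'
    simp only [D, mem_filter, mem_univ, true_and] at hd'D
    simp [S, hd'D.1, hd's]
  have hPM : #P + #M = #D := by
    rw [← card_filter_add_card_filter_not (s := D) fun d => R.faceLen d.symm = 3, add_comm]
    congr 2
    ext d
    simp [M, D, and_assoc]
  have hD : S.filter (fun d => R.faceLen d = 3) = D := by
    ext d
    simp [S, D]
  calc 15 * ∑ e ∈ s, R.fEdge e - 8 * #s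
      = ∑ d ∈ S.filter (fun d => R.faceLen d = 3), w d
        + ∑ d ∈ S.filter (fun d => R.faceLen d ≠ 3), w d := by
        rw [R.fifteen_mul_sum_fEdge_sub_eq hs, sum_filter_add_sum_filter_not]
    _ ≤ #D + ∑ d ∈ P.image Dart.symm, w d := by
        rw [sum_congr rfl hw3, sum_const, nsmul_one, hD]
        linarith [sum_le_sum_of_subset_of_nonpos' hPsymm fun d hd _ => hw4 d (mem_filter.1 hd).2]
    _ ≤ #D + #P * (-3 / 2) := by
        rw [sum_image fun _ _ _ _ h => Dart.symm_involutive.injective h]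
        gcongr
        simpa using sum_le_sum hw6
    _ = (3 * #M - #D) / 2 := by
        rw [← hPM]
        push_cast
        ring

theorem three_mul_card_le_card_of_coe_eq_triBlockOf (hδ : ∀ v, 3 ≤ G.degree v)
    (hK4 : G.CliqueFree 4) (hC5 : G.CycleFree 5) {s : Finset (Sym2 V)} {e : Sym2 V}
    (hs : ↑s = R.triBlockOf e) :
    3 * #({d : G.Dart | d.edge ∈ s ∧ R.faceLen d = 3 ∧ R.faceLen d.symm = 3} : Finset G.Dart) ≤
      #({d : G.Dart | d.edge ∈ s ∧ R.faceLen d = 3} : Finset G.Dart) := by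
  set M : Finset G.Dart := {d | d.edge ∈ s ∧ R.faceLen d = 3 ∧ R.faceLen d.symm = 3}
  set D : Finset G.Dart := {d | d.edge ∈ s ∧ R.faceLen d = 3}
  rcases M.eq_empty_or_nonempty with hM | ⟨y, hy⟩
  · simp [hM]
  obtain ⟨hye, hy3, hys3⟩ : y.edge ∈ s ∧ R.faceLen y = 3 ∧ R.faceLen y.symm = 3 := by
    simpa [M] using hy
  have hblock : ∀ z : G.Dart, z.edge ∈ s ↔ z.edge ∈ R.triBlockOf y.edge := fun z => by
    rw [R.triBlockOf_eq_of_mem (hs ▸ hye : y.edge ∈ R.triBlockOf e), ← hs, Finset.mem_coe]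
  have hM2 : #M ≤ 2 := by
    refine (card_le_card fun m hm => ?_).trans (card_le_two (a := y) (b := y.symm))
    obtain ⟨hme, hm3, hms3⟩ : m.edge ∈ s ∧ R.faceLen m = 3 ∧ R.faceLen m.symm = 3 := by
      simpa [M] using hm
    rcases R.eq_or_eq_symm_of_edge_mem_triBlockOf hδ hK4 hC5 hy3 hys3 ((hblock m).1 hme) hm3
      hms3 with rfl | rfl <;> simp
  have hD6 : 6 ≤ #D := by
    have hsub : R.faceOf y ∪ R.faceOf y.symm ⊆ ↑D := by
      rintro z (hz | hz)
      · simp [D, (hblock z).2 (R.edge_mem_triBlockOf hy3 hz), (R.faceLen_congr hz).trans hy3]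
      · have := R.edge_mem_triBlockOf hys3 hz
        rw [Dart.edge_symm] at this
        simp [D, (hblock z).2 this, (R.faceLen_congr hz).trans hys3]
    calc 6 = (R.faceOf y ∪ R.faceOf y.symm).ncard := by
          rw [Set.ncard_union_eq (R.disjoint_faceOf_symm ((hδ _).trans' (by norm_num)) hy3)]
          change 6 = R.faceLen y + R.faceLen y.symm
          omega
      _ ≤ (↑D : Set G.Dart).ncard := Set.ncard_le_ncard hsub D.finite_toSet
      _ = #D := Set.ncard_coe_finset D
  omega

end Finite

end RotationSystem

end PlanarTuran

theorem triangularBlock_discharging_K4_C5_free_general {V : Type*} [Fintype V] [DecidableEq V]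
    (G : SimpleGraph V) [DecidableRel G.Adj]
    (R : PlanarTuran.RotationSystem G)
    (hK4 : G.CliqueFree 4) (hC5 : G.CycleFree 5)
    (hdeg : ∀ v : V, 3 ≤ G.degree v) :
    ∀ B : Set (Sym2 V), R.IsTriangularBlock B →
      15 * (∑ e ∈ B.toFinite.toFinset, R.fEdge e) - 8 * (B.ncard : ℚ) ≤ 0 := by
  rintro B ⟨e, he, rfl⟩
  have hedges : ∀ e' ∈ (R.triBlockOf e).toFinite.toFinset, e' ∈ G.edgeSet := fun e' he' =>
    R.triBlockOf_subset_edgeSet he ((Set.Finite.mem_toFinset _).1 he')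
  have hdischarge := R.fifteen_mul_sum_fEdge_sub_le
    (R.three_le_faceLen fun v => (hdeg v).trans' (by norm_num))
    (fun _ => R.six_le_faceLen_symm hdeg hC5) hedges
  have hcount := (Nat.cast_le (α := ℚ)).2 <| R.three_mul_card_le_card_of_coe_eq_triBlockOf
    hdeg hK4 hC5 (R.triBlockOf e).toFinite.coe_toFinset
  rw [Nat.cast_mul, Nat.cast_ofNat] at hcount
  rw [Set.ncard_eq_toFinset_card _ (R.triBlockOf e).toFinite]
  linarith

/-- In a plane graph with no `K₄` and no `C₅`, minimum degree at least `3`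
and at least `5` vertices, every triangular block `B` satisfies `15 f(B) - 8 e(B) ≤ 0`. -/
theorem triangularBlock_discharging_K4_C5_free {V : Type*} [Fintype V] [DecidableEq V]
    (G : SimpleGraph V) [DecidableRel G.Adj]
    (R : PlanarTuran.RotationSystem G) (hplane : R.GenusZero)
    (hK4 : G.CliqueFree 4) (hC5 : G.CycleFree 5)
    (hdeg : ∀ v : V, 3 ≤ G.degree v) (hn5 : 5 ≤ Fintype.card V) :
    ∀ B : Set (Sym2 V), R.IsTriangularBlock B →
      15 * (∑ e ∈ B.toFinite.toFinset, R.fEdge e) - 8 * (B.ncard : ℚ) ≤ 0 :=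
  triangularBlock_discharging_K4_C5_free_general G R hK4 hC5 hdeg
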